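/- arXiv:2203.15907 — 2 statements merged into one kernel-verified Lean document; each statement's English description precedes it below -/
import Mathlib

section
/- Let 𝓑 ⊂ {1,...,N}, let 𝓔 be the σ-algebra generated by {X_n : n ∈ 𝓑}, and for an integer m ≥ 2 let q_n(m | 𝓔) be the second largest among the conditional probabilities P(Y_n ≡ j mod m | 𝓔), j = 0,1,...,m−1. Then there exists a constant A ≥ 1, depending only on K and the ellipticity constant C, such that for every n ∉ 𝓑 and almost every sample point: A^{-1} q_n(m) ≤ q_n(m | 𝓔) ≤ A q_n(m). -/
/-!
The coordinates indexed by `𝓑` split into a past block (indices `< n`) and a future block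
(indices `> n`). The Markov property says that, given `X_0, …, X_{t+1}`, the conditional
probability of an event of the future after `t` is a function `φ(X_{t+1})`; averaging it over
the transition kernel from `X_t` rather than over the law of `X_{t+1}` changes it by a factor at
most `C`, by ellipticity. Hence the past up to `t` and the future after `t` are independent up
to a factor `C`. Used three times, this makes `ℙ(X_n ∈ A, U ∩ W)` comparable with
`ℙ(X_n ∈ A) ℙ(U ∩ W)` up to `C³` for `U` in the past and `W` in the future of `n`. Finite
unions of such sets `U ∩ W` approximate every `𝓔`-measurable set, so
`C⁻³ ℙ(X_n ∈ A) ≤ ℙ(X_n ∈ A | 𝓔) ≤ C³ ℙ(X_n ∈ A)` almost surely. Applied to the residue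
classes of `Y_n` modulo `m`, these bounds pass to the second largest value.
-/

open MeasureTheory ProbabilityTheory Filter Finset
open scoped ENNReal Topology

noncomputable section

namespace EdgeworthMC

variable {Ω E : Type*} [MeasurableSpace Ω] [MeasurableSpace E]

/-- The standard Gaussian density `𝔤(u) = (2π)^{-1/2} e^{-u²/2}`. -/
def gaussDensity (u : ℝ) : ℝ := (Real.sqrt (2 * Real.pi))⁻¹ * Real.exp (-u ^ 2 / 2)

/-- `UEChain μ X κ C` : the process `X` is a Markov chain (with respect to the probability
measure `μ`) with transition kernels `κ n` from the state at time `n` to the state at time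
`n+1`, and the chain is uniformly elliptic with ellipticity constant `C`:
`C⁻¹ ℙ(X_{n+1} ∈ A) ≤ ℙ(X_{n+1} ∈ A | X_n = x) ≤ C ℙ(X_{n+1} ∈ A)` for a.e. `x`. -/
def UEChain (μ : Measure Ω) (X : ℕ → Ω → E) (κ : ℕ → Kernel E E) (C : ℝ) : Prop :=
  IsProbabilityMeasure μ ∧
  (∀ n, Measurable (X n)) ∧
  (∀ n, IsMarkovKernel (κ n)) ∧
  (∀ n (A : Set E), MeasurableSet A →
      (μ[fun ω => A.indicator (fun _ => (1 : ℝ)) (X (n + 1) ω) |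
          ⨆ i : Fin (n + 1), MeasurableSpace.comap (X i) (inferInstance : MeasurableSpace E)]
        =ᵐ[μ] fun ω => (κ n (X n ω) A).toReal)) ∧
  (∀ n (A : Set E), MeasurableSet A → ∀ᵐ ω ∂μ,
      κ n (X n ω) A ≤ ENNReal.ofReal C * Measure.map (X (n + 1)) μ A ∧
      Measure.map (X (n + 1)) μ A ≤ ENNReal.ofReal C * κ n (X n ω) A)

/-- Partial sums `S_N = ∑_{n=1}^N f_n(X_n)`. -/
def S (X : ℕ → Ω → E) (f : ℕ → E → ℤ) (N : ℕ) (ω : Ω) : ℤ :=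
  ∑ n ∈ Finset.Icc 1 N, f n (X n ω)

/-- `V_N = Var(S_N)`. -/
def VN (μ : Measure Ω) (X : ℕ → Ω → E) (f : ℕ → E → ℤ) (N : ℕ) : ℝ :=
  variance (fun ω => ((S X f N ω : ℝ))) μ

/-- `σ_N = √V_N`. -/
def sigN (μ : Measure Ω) (X : ℕ → Ω → E) (f : ℕ → E → ℤ) (N : ℕ) : ℝ :=
  Real.sqrt (VN μ X f N)

/-- `a_N = 𝔼(S_N)`. -/
def meanS (μ : Measure Ω) (X : ℕ → Ω → E) (f : ℕ → E → ℤ) (N : ℕ) : ℝ :=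
  ∫ ω, ((S X f N ω : ℝ)) ∂μ

/-- The second largest value among the (finitely many) values of `p`, counted with
multiplicity: it equals `min_j max_{j' ≠ j} p j'`. -/
def secondLargest {ι : Type*} (p : ι → ℝ) : ℝ := ⨅ j, sSup (p '' {j}ᶜ)

/-- `q_n(m)` : the second largest value among `ℙ(Y_n ≡ j mod m)`, `j = 0,…,m-1`. -/
def qres (μ : Measure Ω) (X : ℕ → Ω → E) (f : ℕ → E → ℤ) (n m : ℕ) : ℝ :=
  secondLargest (fun j : ZMod m => (μ {ω | ((f n (X n ω) : ZMod m)) = j}).toReal)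

/-- `M_N = min_{2 ≤ m ≤ 2K} ∑_{n=1}^N q_n(m)`. -/
def MN (μ : Measure Ω) (X : ℕ → Ω → E) (f : ℕ → E → ℤ) (K N : ℕ) : ℝ :=
  sInf ((fun m => ∑ n ∈ Finset.Icc 1 N, qres μ X f n m) '' (Set.Icc 2 (2 * K)))

/-- `S_N` obeys the Edgeworth expansion of order `r` : there are polynomials `P_{b,N}`,
with coefficients uniformly bounded in `N` and degrees not depending on `N`, such that
uniformly in `k ∈ ℤ`,
`ℙ(S_N = k) = ∑_{b=1}^r σ_N^{-b} P_{b,N}(k_N) 𝔤(k_N) + o(σ_N^{-r})`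
where `k_N = (k - 𝔼 S_N)/σ_N`. -/
def Edgeworth (μ : Measure Ω) (X : ℕ → Ω → E) (f : ℕ → E → ℤ) (r : ℕ) : Prop :=
  ∃ (D : ℕ) (Cb : ℝ) (P : ℕ → ℕ → Polynomial ℝ),
    (∀ b N, (P b N).natDegree ≤ D) ∧
    (∀ b N i, |(P b N).coeff i| ≤ Cb) ∧
    ∀ ε > 0, ∃ N₀, ∀ N ≥ N₀, ∀ k : ℤ,
      |(μ {ω | S X f N ω = k}).toReal -
          ∑ b ∈ Finset.Icc 1 r, (sigN μ X f N)⁻¹ ^ b *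
            (P b N).eval (((k : ℝ) - meanS μ X f N) / sigN μ X f N) *
            gaussDensity (((k : ℝ) - meanS μ X f N) / sigN μ X f N)|
        ≤ ε * (sigN μ X f N)⁻¹ ^ r

/-- The σ-algebra generated by `X_{j 1}, …, X_{j ℓ}`. -/
def sigmaOf (X : ℕ → Ω → E) {ℓ : ℕ} (j : Fin ℓ → ℕ) : MeasurableSpace Ω :=
  ⨆ i : Fin ℓ, MeasurableSpace.comap (X (j i)) (inferInstance : MeasurableSpace E)

/-- Conditional probability of the event `s` given the σ-algebra `m`. -/
def condProb (μ : Measure Ω) (m : MeasurableSpace Ω) (s : Set Ω) : Ω → ℝ :=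
  μ[s.indicator (fun _ => (1 : ℝ)) | m]

/-- `S_N` obeys the Edgeworth expansion of order `r` in a conditionally stable way:
for every `ℓ`, the order `r` Edgeworth expansion holds for the conditional law of `S_N`
given `X_{j_1},…,X_{j_ℓ}`, with error term `o_ℓ(σ_N^{-r})` and polynomial coefficient
bounds depending only on `ℓ` (and `r`), uniformly over all choices of indices
`1 ≤ j_1,…,j_ℓ ≤ N`. -/
def CondStableEdgeworth (μ : Measure Ω) (X : ℕ → Ω → E) (f : ℕ → E → ℤ) (r : ℕ) : Prop :=
  ∀ ℓ : ℕ, ∃ (D : ℕ) (Cb : ℝ), ∀ ε > 0, ∃ N₀, ∀ N ≥ N₀,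
    ∀ j : Fin ℓ → ℕ, (∀ i, j i ∈ Finset.Icc 1 N) →
      ∃ P : ℕ → Ω → Polynomial ℝ,
        (∀ b ω, (P b ω).natDegree ≤ D) ∧
        (∀ b ω i, |(P b ω).coeff i| ≤ Cb) ∧
        ∀ᵐ ω ∂μ, ∀ k : ℤ,
          |condProb μ (sigmaOf X j) {ω' | S X f N ω' = k} ω -
              ∑ b ∈ Finset.Icc 1 r, (sigN μ X f N)⁻¹ ^ b *
                (P b ω).eval (((k : ℝ) -
                    (μ[fun ω' => ((S X f N ω' : ℝ)) | sigmaOf X j]) ω) / sigN μ X f N) *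
                gaussDensity (((k : ℝ) -
                    (μ[fun ω' => ((S X f N ω' : ℝ)) | sigmaOf X j]) ω) / sigN μ X f N)|
            ≤ ε * (sigN μ X f N)⁻¹ ^ r

/-- `t` is a resonant point: `t = 2πl/m` with `0 < m ≤ 2K`, `0 ≤ l < m`. -/
def IsResonant (K : ℕ) (t : ℝ) : Prop :=
  ∃ l m : ℕ, 0 < m ∧ m ≤ 2 * K ∧ l < m ∧ t = 2 * Real.pi * l / m

/-- The conditional characteristic function `𝔼[e^{itS_N} | X_{j_1},…,X_{j_ℓ}]`. -/
def condChar (μ : Measure Ω) (X : ℕ → Ω → E) (f : ℕ → E → ℤ) (t : ℝ) (N : ℕ)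
    {ℓ : ℕ} (j : Fin ℓ → ℕ) : Ω → ℂ :=
  μ[fun ω => Complex.exp (Complex.I * (t : ℂ) * ((S X f N ω : ℤ) : ℂ)) | sigmaOf X j]

end EdgeworthMC

namespace EdgeworthMC

variable {Ω E : Type*} [MeasurableSpace Ω] [MeasurableSpace E]

/-- The σ-algebra `𝓔` generated by `{X_n : n ∈ 𝓑}`. -/
def sigmaFinset (X : ℕ → Ω → E) (𝓑 : Finset ℕ) : MeasurableSpace Ω :=
  ⨆ n ∈ 𝓑, MeasurableSpace.comap (X n) (inferInstance : MeasurableSpace E)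

/-- `q_n(m | 𝓔)(ω)` : the second largest among the conditional probabilities
`ℙ(Y_n ≡ j mod m | 𝓔)`, `j = 0,…,m-1`. -/
def condQres (μ : Measure Ω) (X : ℕ → Ω → E) (f : ℕ → E → ℤ)
    (𝓔 : MeasurableSpace Ω) (n mm : ℕ) (ω : Ω) : ℝ :=
  secondLargest (fun j : ZMod mm =>
    (μ[Set.indicator {ω' | ((f n (X n ω') : ZMod mm)) = j} (fun _ => (1 : ℝ)) | 𝓔]) ω)

end EdgeworthMC

namespace EdgeworthMC

open scoped symmDiff

section Generic

variable {α β : Type*}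

def Comparable (c a b : ℝ≥0∞) : Prop := a ≤ c * b ∧ b ≤ c * a

namespace Comparable

variable {c d a b e : ℝ≥0∞}

lemma refl (hc : 1 ≤ c) (a : ℝ≥0∞) : Comparable c a a :=
  ⟨le_mul_of_one_le_left' hc, le_mul_of_one_le_left' hc⟩

lemma symm (h : Comparable c a b) : Comparable c b a :=
  ⟨h.2, h.1⟩

lemma trans (h : Comparable c a b) (h' : Comparable d b e) : Comparable (c * d) a e :=
  ⟨h.1.trans (by grw [h'.1]; rw [mul_assoc]),
    h'.2.trans (by grw [h.2]; rw [mul_left_comm, mul_assoc])⟩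

lemma mul_right (h : Comparable c a b) (x : ℝ≥0∞) : Comparable c (a * x) (b * x) :=
  ⟨by grw [h.1]; rw [mul_assoc], by grw [h.2]; rw [mul_assoc]⟩

lemma toReal (h : Comparable c a b) (hc : c ≠ ∞) (hb : b ≠ ∞) :
    a.toReal ≤ c.toReal * b.toReal ∧ b.toReal ≤ c.toReal * a.toReal := by
  have ha : a ≠ ∞ := ne_top_of_le_ne_top (ENNReal.mul_ne_top hc hb) h.1
  rw [← ENNReal.toReal_mul, ← ENNReal.toReal_mul]
  exact ⟨ENNReal.toReal_mono (ENNReal.mul_ne_top hc hb) h.1,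
    ENNReal.toReal_mono (ENNReal.mul_ne_top hc ha) h.2⟩

end Comparable

lemma secondLargest_le_mul {ι : Type*} [Finite ι] [Nontrivial ι] {x y : ι → ℝ} {a : ℝ}
    (ha : 0 ≤ a) (h : ∀ j, x j ≤ a * y j) : secondLargest x ≤ a * secondLargest y := by
  obtain ⟨j₀, hj₀⟩ := Finite.exists_min fun j => sSup (y '' {j}ᶜ)
  have hbdd : BddBelow (Set.range fun j => sSup (x '' {j}ᶜ)) := (Set.finite_range _).bddBelow
  have hy : sSup (y '' {j₀}ᶜ) = secondLargest y :=
    le_antisymm (le_ciInf hj₀) (ciInf_le (Set.finite_range _).bddBelow j₀)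
  calc secondLargest x ≤ sSup (x '' {j₀}ᶜ) := ciInf_le hbdd j₀
    _ ≤ a * sSup (y '' {j₀}ᶜ) := by
      obtain ⟨k, hk⟩ := exists_ne j₀
      refine csSup_le ⟨x k, k, hk, rfl⟩ ?_
      rintro _ ⟨j, hj, rfl⟩
      exact (h j).trans (mul_le_mul_of_nonneg_left
        (le_csSup ((Set.toFinite _).image _).bddAbove ⟨j, hj, rfl⟩) ha)
    _ = a * secondLargest y := by rw [hy]

def interSets (m₁ m₂ : MeasurableSpace α) : Set (Set α) :=
  {s | ∃ U V, MeasurableSet[m₁] U ∧ MeasurableSet[m₂] V ∧ s = U ∩ V}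

lemma isSetSemiring_interSets (m₁ m₂ : MeasurableSpace α) : IsSetSemiring (interSets m₁ m₂) where
  empty_mem := ⟨∅, ∅, @MeasurableSet.empty _ m₁, @MeasurableSet.empty _ m₂, by simp⟩
  inter_mem := by
    rintro _ ⟨U, V, hU, hV, rfl⟩ _ ⟨U', V', hU', hV', rfl⟩
    exact ⟨U ∩ U', V ∩ V', @MeasurableSet.inter _ m₁ _ _ hU hU',
      @MeasurableSet.inter _ m₂ _ _ hV hV', by ac_rfl⟩
  sdiff_eq_sUnion' := by
    classical
    rintro _ ⟨U, V, hU, hV, rfl⟩ _ ⟨U', V', hU', hV', rfl⟩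
    refine ⟨{(U \ U') ∩ V, (U ∩ U') ∩ (V \ V')}, ?_, ?_, ?_⟩
    · simp only [Finset.coe_insert, Finset.coe_singleton, Set.insert_subset_iff,
        Set.singleton_subset_iff]
      exact ⟨⟨_, _, @MeasurableSet.diff _ m₁ _ _ hU hU', hV, rfl⟩,
        ⟨_, _, @MeasurableSet.inter _ m₁ _ _ hU hU', @MeasurableSet.diff _ m₂ _ _ hV hV', rfl⟩⟩
    · simp only [Finset.coe_insert, Finset.coe_singleton]
      refine (Set.pairwiseDisjoint_singleton _ _).insert fun _ h _ => ?_
      rw [Set.mem_singleton_iff.mp h]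
      exact Set.disjoint_left.mpr fun x hx hx' => hx.1.2 hx'.1.2
    · ext x
      simp only [Set.mem_sdiff, Set.mem_inter_iff, Finset.coe_insert, Finset.coe_singleton,
        Set.sUnion_insert, Set.sUnion_singleton, Set.mem_union]
      tauto

lemma generateFrom_interSets (m₁ m₂ : MeasurableSpace α) :
    MeasurableSpace.generateFrom (interSets m₁ m₂) = m₁ ⊔ m₂ := by
  refine le_antisymm (MeasurableSpace.generateFrom_le ?_) (sup_le ?_ ?_)
  · rintro _ ⟨U, V, hU, hV, rfl⟩
    exact (le_sup_left (b := m₂) _ hU).inter (le_sup_right (a := m₁) _ hV)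
  · exact fun U hU => MeasurableSpace.measurableSet_generateFrom ⟨U, .univ, hU, .univ, by simp⟩
  · exact fun V hV => MeasurableSpace.measurableSet_generateFrom ⟨.univ, V, .univ, hV, by simp⟩

lemma measure_le_of_isSetSemiring {m : MeasurableSpace α} {ν₁ ν₂ : Measure α}
    [IsFiniteMeasure ν₁] [IsFiniteMeasure ν₂] {C : Set (Set α)} (hC : IsSetSemiring C)
    (hCuniv : Set.univ ∈ C) (hgen : m = MeasurableSpace.generateFrom C)
    (h : ∀ s ∈ C, ν₁ s ≤ ν₂ s) : ν₁ ≤ ν₂ := by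
  have hsupClosure : ∀ t ∈ supClosure C, ν₁ t ≤ ν₂ t := by
    intro t ht
    obtain ⟨P, hP⟩ := hC.mem_supClosure_iff.mp ht
    have hsum (ν : Measure α) : ν t = ∑ p ∈ P.parts, ν p := by
      conv_lhs => rw [← P.sup_parts, Finset.sup_id_set_eq_sUnion, Set.sUnion_eq_biUnion]
      exact measure_biUnion_finset P.disjoint
        fun p hp => hgen ▸ MeasurableSpace.measurableSet_generateFrom (hP hp)
    rw [hsum, hsum]
    exact Finset.sum_le_sum fun p hp => h p (hP hp)
  refine Measure.le_intro fun s hs _ => ENNReal.le_of_forall_pos_le_add fun ε hε _ => ?_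
  obtain ⟨t, ht, hts⟩ := exists_measure_symmDiff_lt_of_generateFrom_isSetSemiring
    (μ := ν₁ + ν₂) hC ⟨{Set.univ}, by simp, by simpa, by simp⟩ hgen hs
    (ENNReal.coe_pos.mpr hε)
  calc ν₁ s ≤ ν₁ t + ν₁ (s ∆ t) := tsub_le_iff_left.mp le_measure_symmDiff
    _ ≤ ν₂ t + ν₁ (t ∆ s) := by rw [symmDiff_comm]; grw [hsupClosure t ht]
    _ ≤ ν₂ s + ν₂ (t ∆ s) + ν₁ (t ∆ s) := by
      gcongr; exact tsub_le_iff_left.mp le_measure_symmDiff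
    _ = ν₂ s + (ν₁ + ν₂) (t ∆ s) := by rw [Measure.add_apply]; ring
    _ ≤ ν₂ s + ε := by gcongr

section SupSigmaAlgebra

variable {m₁ m₂ m₀ : MeasurableSpace α}

lemma measure_le_of_forall_inter_le (hm₁ : m₁ ≤ m₀) (hm₂ : m₂ ≤ m₀) {ν₁ ν₂ : Measure α}
    [IsFiniteMeasure ν₁] [IsFiniteMeasure ν₂]
    (h : ∀ U V, MeasurableSet[m₁] U → MeasurableSet[m₂] V → ν₁ (U ∩ V) ≤ ν₂ (U ∩ V))
    {S : Set α} (hS : MeasurableSet[m₁ ⊔ m₂] S) : ν₁ S ≤ ν₂ S := by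
  have hm := sup_le hm₁ hm₂
  have hle : ν₁.trim hm ≤ ν₂.trim hm := by
    refine measure_le_of_isSetSemiring (isSetSemiring_interSets m₁ m₂)
      ⟨_, _, @MeasurableSet.univ _ m₁, @MeasurableSet.univ _ m₂, (Set.inter_self _).symm⟩
      (generateFrom_interSets m₁ m₂).symm ?_
    rintro _ ⟨U, V, hU, hV, rfl⟩
    have hUV : MeasurableSet[m₁ ⊔ m₂] (U ∩ V) :=
      (le_sup_left (b := m₂) _ hU).inter (le_sup_right (a := m₁) _ hV)
    rw [trim_measurableSet_eq hm hUV, trim_measurableSet_eq hm hUV]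
    exact h U V hU hV
  simpa only [trim_measurableSet_eq hm hS] using hle S

lemma comparable_of_forall_inter (hm₁ : m₁ ≤ m₀) (hm₂ : m₂ ≤ m₀) {μ : Measure α}
    [IsFiniteMeasure μ] {c : ℝ≥0∞} (hc : c ≠ ∞) {A : Set α} (hA : MeasurableSet A)
    (h : ∀ U V, MeasurableSet[m₁] U → MeasurableSet[m₂] V →
      Comparable c (μ (A ∩ (U ∩ V))) (μ A * μ (U ∩ V)))
    {S : Set α} (hS : MeasurableSet[m₁ ⊔ m₂] S) : Comparable c (μ (A ∩ S)) (μ A * μ S) := by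
  have : IsFiniteMeasure ((c * μ A) • μ) :=
    μ.smul_finite (ENNReal.mul_ne_top hc (measure_ne_top _ _))
  have : IsFiniteMeasure (μ A • μ) := μ.smul_finite (measure_ne_top _ _)
  have : IsFiniteMeasure (c • μ.restrict A) := (μ.restrict A).smul_finite hc
  constructor
  · simpa [Measure.restrict_apply' hA, Set.inter_comm, mul_assoc] using
      measure_le_of_forall_inter_le (ν₁ := μ.restrict A) (ν₂ := (c * μ A) • μ) hm₁ hm₂
        (fun U V hU hV => by
          simpa [Measure.restrict_apply' hA, Set.inter_comm, mul_assoc] using (h U V hU hV).1) hS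
  · simpa [Measure.restrict_apply' hA, Set.inter_comm, mul_assoc] using
      measure_le_of_forall_inter_le (ν₁ := μ A • μ) (ν₂ := c • μ.restrict A) hm₁ hm₂
        (fun U V hU hV => by
          simpa [Measure.restrict_apply' hA, Set.inter_comm, mul_assoc] using (h U V hU hV).2) hS

end SupSigmaAlgebra

section CondExp

variable {m m₀ : MeasurableSpace α} {μ : Measure α} [IsFiniteMeasure μ] {s : Set α} {b : ℝ}

lemma setIntegral_condExp_indicator_one (hm : m ≤ m₀) (hs : MeasurableSet[m₀] s) {t : Set α}
    (ht : MeasurableSet[m] t) :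
    ∫ x in t, (μ[s.indicator (fun _ => (1 : ℝ)) | m]) x ∂μ = μ.real (s ∩ t) := by
  rw [setIntegral_condExp hm ((integrable_const 1).indicator hs) ht]
  exact (integral_indicator_one hs).trans (measureReal_restrict_apply hs)

lemma condExp_indicator_ae_le (hm : m ≤ m₀) (hs : MeasurableSet[m₀] s)
    (h : ∀ t, MeasurableSet[m] t → μ.real (s ∩ t) ≤ b * μ.real t) :
    μ[s.indicator (fun _ => (1 : ℝ)) | m] ≤ᵐ[μ] fun _ => b := by
  refine ae_le_of_ae_le_trim (hm := hm) (ae_le_of_forall_setIntegral_le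
    (integrable_condExp.trim hm stronglyMeasurable_condExp) (integrable_const b) fun t ht _ => ?_)
  rw [← setIntegral_trim hm stronglyMeasurable_condExp ht,
    ← setIntegral_trim hm stronglyMeasurable_const ht,
    setIntegral_condExp_indicator_one hm hs ht, setIntegral_const, smul_eq_mul, mul_comm]
  exact h t ht

lemma ae_le_condExp_indicator (hm : m ≤ m₀) (hs : MeasurableSet[m₀] s)
    (h : ∀ t, MeasurableSet[m] t → b * μ.real t ≤ μ.real (s ∩ t)) :
    (fun _ => b) ≤ᵐ[μ] μ[s.indicator (fun _ => (1 : ℝ)) | m] := by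
  refine ae_le_of_ae_le_trim (hm := hm) (ae_le_of_forall_setIntegral_le (integrable_const b)
    (integrable_condExp.trim hm stronglyMeasurable_condExp) fun t ht _ => ?_)
  rw [← setIntegral_trim hm stronglyMeasurable_condExp ht,
    ← setIntegral_trim hm stronglyMeasurable_const ht,
    setIntegral_condExp_indicator_one hm hs ht, setIntegral_const, smul_eq_mul, mul_comm]
  exact h t ht

end CondExp

section LIntegral

variable [MeasurableSpace α] [MeasurableSpace β] {μ : Measure α} {c : ℝ≥0∞}

lemma ae_lintegral_le_mul {ν₁ ν₂ : α → Measure β}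
    (h : ∀ A, MeasurableSet A → ∀ᵐ a ∂μ, ν₁ a A ≤ c * ν₂ a A) {φ : β → ℝ≥0∞}
    (hφ : Measurable φ) : ∀ᵐ a ∂μ, ∫⁻ y, φ y ∂ν₁ a ≤ c * ∫⁻ y, φ y ∂ν₂ a := by
  have hsimple (g : SimpleFunc β ℝ≥0∞) : ∀ᵐ a ∂μ, g.lintegral (ν₁ a) ≤ c * g.lintegral (ν₂ a) := by
    filter_upwards [(Filter.eventually_all_finset g.range).2
      fun x _ => h _ (g.measurableSet_preimage {x})] with a ha
    simp only [SimpleFunc.lintegral, Finset.mul_sum]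
    exact Finset.sum_le_sum fun x hx => by rw [mul_left_comm]; gcongr; exact ha x hx
  filter_upwards [ae_all_iff.2 fun k => hsimple (SimpleFunc.eapprox φ k)] with a ha
  rw [lintegral_eq_iSup_eapprox_lintegral hφ, lintegral_eq_iSup_eapprox_lintegral hφ,
    ENNReal.mul_iSup]
  exact iSup_mono ha

lemma comparable_setLIntegral {b : ℝ≥0∞} {f : α → ℝ≥0∞} (hf : Measurable f)
    (h : ∀ᵐ x ∂μ, Comparable c (f x) b) (U : Set α) :
    Comparable c (∫⁻ x in U, f x ∂μ) (b * μ U) := by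
  constructor
  · calc ∫⁻ x in U, f x ∂μ ≤ ∫⁻ _ in U, c * b ∂μ :=
          lintegral_mono_ae (ae_restrict_of_ae (h.mono fun _ hx => hx.1))
      _ = c * (b * μ U) := by rw [setLIntegral_const, mul_assoc]
  · calc b * μ U = ∫⁻ _ in U, b ∂μ := (setLIntegral_const U b).symm
      _ ≤ ∫⁻ x in U, c * f x ∂μ :=
          lintegral_mono_ae (ae_restrict_of_ae (h.mono fun _ hx => hx.2))
      _ = c * ∫⁻ x in U, f x ∂μ := lintegral_const_mul c hf

end LIntegral

end Generic

variable {Ω E : Type*} [MeasurableSpace E]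

section SigmaSet

variable {X : ℕ → Ω → E}

abbrev sigmaSet (X : ℕ → Ω → E) (S : Set ℕ) : MeasurableSpace Ω :=
  ⨆ j ∈ S, MeasurableSpace.comap (X j) inferInstance

lemma sigmaSet_mono {S T : Set ℕ} (h : S ⊆ T) : sigmaSet X S ≤ sigmaSet X T :=
  biSup_mono h

lemma sigmaSet_union (S T : Set ℕ) : sigmaSet X (S ∪ T) = sigmaSet X S ⊔ sigmaSet X T :=
  _root_.iSup_union

lemma comap_le_sigmaSet {S : Set ℕ} {j : ℕ} (hj : j ∈ S) :
    MeasurableSpace.comap (X j) inferInstance ≤ sigmaSet X S :=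
  le_iSup₂ (f := fun j (_ : j ∈ S) => MeasurableSpace.comap (X j) inferInstance) j hj

lemma measurableSet_sigmaSet_preimage {S : Set ℕ} {j : ℕ} (hj : j ∈ S) {B : Set E}
    (hB : MeasurableSet B) : MeasurableSet[sigmaSet X S] (X j ⁻¹' B) :=
  comap_le_sigmaSet hj _ ⟨B, hB, rfl⟩

lemma sigmaSet_le [MeasurableSpace Ω] (hX : ∀ n, Measurable (X n)) (S : Set ℕ) :
    sigmaSet X S ≤ ‹MeasurableSpace Ω› :=
  iSup₂_le fun j _ => (hX j).comap_le

lemma iSup_comap_fin_eq_sigmaSet_Iic (t : ℕ) :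
    ⨆ i : Fin (t + 1), MeasurableSpace.comap (X i) inferInstance = sigmaSet X (Set.Iic t) :=
  le_antisymm (iSup_le fun i => comap_le_sigmaSet (Nat.lt_succ_iff.mp i.2))
    (iSup₂_le fun j hj => le_iSup_of_le ⟨j, Nat.lt_succ_of_le hj⟩ le_rfl)

end SigmaSet

variable [MeasurableSpace Ω]

structure IsMarkovChain (μ : Measure Ω) (X : ℕ → Ω → E) (κ : ℕ → Kernel E E) : Prop where
  measurable : ∀ n, Measurable (X n)
  isMarkovKernel : ∀ n, IsMarkovKernel (κ n)
  condExp_indicator : ∀ n (A : Set E), MeasurableSet A →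
    μ[(X (n + 1) ⁻¹' A).indicator (fun _ => (1 : ℝ)) | sigmaSet X (Set.Iic n)]
      =ᵐ[μ] fun ω => (κ n (X n ω) A).toReal

def IsElliptic (μ : Measure Ω) (X : ℕ → Ω → E) (κ : ℕ → Kernel E E) (c : ℝ≥0∞) : Prop :=
  ∀ n (A : Set E), MeasurableSet A →
    ∀ᵐ ω ∂μ, Comparable c (κ n (X n ω) A) (μ.map (X (n + 1)) A)

lemma UEChain.isMarkovChain {μ : Measure Ω} {X : ℕ → Ω → E} {κ : ℕ → Kernel E E} {C : ℝ}
    (h : UEChain μ X κ C) : IsMarkovChain μ X κ where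
  measurable := h.2.1
  isMarkovKernel := h.2.2.1
  condExp_indicator n A hA := by
    rw [← iSup_comap_fin_eq_sigmaSet_Iic]
    exact h.2.2.2.1 n A hA

lemma UEChain.isElliptic {μ : Measure Ω} {X : ℕ → Ω → E} {κ : ℕ → Kernel E E} {C : ℝ}
    (h : UEChain μ X κ C) : IsElliptic μ X κ (ENNReal.ofReal C) :=
  h.2.2.2.2

lemma IsElliptic.ae_comparable_lintegral {μ : Measure Ω} {X : ℕ → Ω → E} {κ : ℕ → Kernel E E}
    {c : ℝ≥0∞} (hE : IsElliptic μ X κ c) (n : ℕ) {φ : E → ℝ≥0∞} (hφ : Measurable φ) :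
    ∀ᵐ ω ∂μ, Comparable c (∫⁻ y, φ y ∂κ n (X n ω)) (∫⁻ y, φ y ∂μ.map (X (n + 1))) := by
  filter_upwards [ae_lintegral_le_mul (ν₂ := fun _ => μ.map (X (n + 1)))
      (fun A hA => (hE n A hA).mono fun _ h => h.1) hφ,
    ae_lintegral_le_mul (ν₁ := fun _ => μ.map (X (n + 1)))
      (fun A hA => (hE n A hA).mono fun _ h => h.2) hφ] with ω h₁ h₂
  exact ⟨h₁, h₂⟩

/-- `φ ∘ X t` is a version of `ℙ(V | X_0, …, X_t)`. -/
def CondProbFactors (μ : Measure Ω) (X : ℕ → Ω → E) (t : ℕ) (V : Set Ω) : Prop :=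
  ∃ φ : E → ℝ≥0∞, Measurable φ ∧
    ∀ U, MeasurableSet[sigmaSet X (Set.Iic t)] U → μ (U ∩ V) = ∫⁻ ω in U, φ (X t ω) ∂μ

namespace CondProbFactors

variable {μ : Measure Ω} {X : ℕ → Ω → E} {t : ℕ} {V : Set Ω}

lemma empty : CondProbFactors μ X t ∅ :=
  ⟨0, measurable_const, fun _ _ => by simp⟩

lemma univ : CondProbFactors μ X t Set.univ :=
  ⟨1, measurable_const, fun _ _ => by simp⟩

lemma preimage_inter (hXt : Measurable (X t)) {B : Set E} (hB : MeasurableSet B)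
    (h : CondProbFactors μ X t V) : CondProbFactors μ X t (X t ⁻¹' B ∩ V) := by
  obtain ⟨φ, hφ, hrep⟩ := h
  refine ⟨B.indicator φ, hφ.indicator hB, fun U hU => ?_⟩
  have hUB := hU.inter (measurableSet_sigmaSet_preimage Set.self_mem_Iic hB)
  rw [← Set.inter_assoc, hrep _ hUB, Set.inter_comm, ← Measure.restrict_restrict (hXt hB)]
  simp_rw [← Set.indicator_comp_right]
  exact (lintegral_indicator (hXt hB) _).symm

lemma compl [IsFiniteMeasure μ] (hX : ∀ n, Measurable (X n)) (hV : MeasurableSet V)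
    (h : CondProbFactors μ X t V) : CondProbFactors μ X t Vᶜ := by
  obtain ⟨φ, hφ, hrep⟩ := h
  have hφ_le : ∀ᵐ ω ∂μ, φ (X t ω) ≤ 1 := by
    refine ae_of_ae_map (hX t).aemeasurable (ae_le_of_forall_setLIntegral_le_of_sigmaFinite
      (μ := μ.map (X t)) (g := fun _ => 1) hφ fun D hD _ => ?_)
    rw [setLIntegral_map hD hφ (hX t),
      ← hrep _ (measurableSet_sigmaSet_preimage Set.self_mem_Iic hD), setLIntegral_one,
      Measure.map_apply (hX t) hD]
    exact measure_mono Set.inter_subset_left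
  refine ⟨1 - φ, measurable_const.sub hφ, fun U hU => ?_⟩
  have hfin : ∫⁻ ω in U, φ (X t ω) ∂μ ≠ ∞ := hrep U hU ▸ measure_ne_top _ _
  rw [← Set.sdiff_eq, ENNReal.eq_sub_of_add_eq (measure_ne_top _ _)
      (measure_sdiff_add_inter U hV), hrep U hU, ← setLIntegral_one]
  exact (lintegral_sub (f := fun _ => 1) (hφ.comp (hX t)) hfin (ae_restrict_of_ae hφ_le)).symm

lemma iUnion [IsFiniteMeasure μ] (hX : ∀ n, Measurable (X n)) {V : ℕ → Set Ω}
    (hV : ∀ i, MeasurableSet (V i)) (hdisj : Pairwise (Function.onFun Disjoint V))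
    (h : ∀ i, CondProbFactors μ X t (V i)) : CondProbFactors μ X t (⋃ i, V i) := by
  choose φ hφ hrep using h
  refine ⟨fun y => ∑' i, φ i y, Measurable.tsum hφ, fun U hU => ?_⟩
  rw [Set.inter_iUnion, measure_iUnion
      (fun i j hij => (hdisj hij).mono Set.inter_subset_right Set.inter_subset_right)
      fun i => (sigmaSet_le hX _ U hU).inter (hV i)]
  exact (tsum_congr fun i => hrep i U hU).trans
    (lintegral_tsum fun i => ((hφ i).comp (hX t)).aemeasurable).symm

end CondProbFactors

namespace IsMarkovChain

variable {μ : Measure Ω} {X : ℕ → Ω → E} {κ : ℕ → Kernel E E} {c : ℝ≥0∞} {t : ℕ} {U V : Set Ω}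

section Finite

variable [IsFiniteMeasure μ]

lemma measure_inter_preimage_succ (hX : IsMarkovChain μ X κ)
    (hU : MeasurableSet[sigmaSet X (Set.Iic t)] U) {B : Set E} (hB : MeasurableSet B) :
    μ (U ∩ X (t + 1) ⁻¹' B) = ∫⁻ ω in U, κ t (X t ω) B ∂μ := by
  have := hX.isMarkovKernel t
  have hle := sigmaSet_le hX.measurable (Set.Iic t)
  have hκB : Measurable fun ω => κ t (X t ω) B :=
    (κ t).measurable_coe hB |>.comp (hX.measurable t)
  have hfin : ∫⁻ ω in U, κ t (X t ω) B ∂μ ≠ ∞ :=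
    ne_top_of_le_ne_top (measure_ne_top μ U)
      ((lintegral_mono fun _ => prob_le_one).trans_eq (setLIntegral_one U))
  rw [← ENNReal.toReal_eq_toReal_iff' (measure_ne_top _ _) hfin, Set.inter_comm]
  calc μ.real (X (t + 1) ⁻¹' B ∩ U)
      = ∫ ω in U,
          (μ[(X (t + 1) ⁻¹' B).indicator (fun _ => (1 : ℝ)) | sigmaSet X (Set.Iic t)]) ω ∂μ :=
        (setIntegral_condExp_indicator_one hle (hX.measurable _ hB) hU).symm
    _ = ∫ ω in U, (κ t (X t ω) B).toReal ∂μ :=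
        setIntegral_congr_ae (hle _ hU) ((hX.condExp_indicator t B hB).mono fun _ h _ => h)
    _ = (∫⁻ ω in U, κ t (X t ω) B ∂μ).toReal :=
        integral_toReal hκB.aemeasurable (ae_of_all _ fun _ => measure_lt_top _ _)

lemma setLIntegral_comp_succ (hX : IsMarkovChain μ X κ)
    (hU : MeasurableSet[sigmaSet X (Set.Iic t)] U) {φ : E → ℝ≥0∞} (hφ : Measurable φ) :
    ∫⁻ ω in U, φ (X (t + 1) ω) ∂μ = ∫⁻ ω in U, ∫⁻ y, φ y ∂κ t (X t ω) ∂μ := by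
  have hκ : Measurable fun ω => κ t (X t ω) := (κ t).measurable.comp (hX.measurable t)
  have hmap : (μ.restrict U).map (X (t + 1)) = (μ.restrict U).bind fun ω => κ t (X t ω) := by
    ext B hB
    rw [Measure.map_apply (hX.measurable _) hB, Measure.restrict_apply (hX.measurable _ hB),
      Measure.bind_apply hB hκ.aemeasurable, Set.inter_comm,
      hX.measure_inter_preimage_succ hU hB]
  rw [← lintegral_map hφ (hX.measurable _), hmap,
    Measure.lintegral_bind hκ.aemeasurable hφ.aemeasurable]

lemma condProbFactors_of_succ (hX : IsMarkovChain μ X κ) (h : CondProbFactors μ X (t + 1) V) :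
    CondProbFactors μ X t V := by
  obtain ⟨φ, hφ, hrep⟩ := h
  refine ⟨fun x => ∫⁻ y, φ y ∂κ t x, hφ.lintegral_kernel, fun U hU => ?_⟩
  rw [hrep U (sigmaSet_mono (Set.Iic_subset_Iic.2 t.le_succ) U hU)]
  exact hX.setLIntegral_comp_succ hU hφ

lemma condProbFactors_of_le (hX : IsMarkovChain μ X κ) {s : ℕ} (hst : s ≤ t)
    (h : CondProbFactors μ X t V) : CondProbFactors μ X s V := by
  induction t, hst using Nat.le_induction with
  | base => exact h
  | succ t _ ih => exact ih (hX.condProbFactors_of_succ h)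

lemma condProbFactors_biInter (hX : IsMarkovChain μ X κ) (T : Finset ℕ) {W : ℕ → Set Ω}
    (hW : ∀ j ∈ T, MeasurableSet[MeasurableSpace.comap (X j) inferInstance] (W j))
    (ht : ∀ j ∈ T, t ≤ j) : CondProbFactors μ X t (⋂ j ∈ T, W j) := by
  induction T using Finset.induction_on_min generalizing t with
  | empty => simpa using CondProbFactors.univ
  | insert a T haT ih =>
    obtain ⟨B, hB, hBW⟩ := hW a (Finset.mem_insert_self a T)
    have hT : CondProbFactors μ X a (⋂ j ∈ T, W j) :=
      ih (fun j hj => hW j (Finset.mem_insert_of_mem hj)) fun j hj => (haT j hj).le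
    rw [Finset.set_biInter_insert, ← hBW]
    exact hX.condProbFactors_of_le (ht a (Finset.mem_insert_self a T))
      (hT.preimage_inter (hX.measurable a) hB)

lemma condProbFactors_of_measurableSet (hX : IsMarkovChain μ X κ)
    (hV : MeasurableSet[sigmaSet X (Set.Ioi t)] V) : CondProbFactors μ X (t + 1) V := by
  refine MeasurableSpace.induction_on_inter (m := sigmaSet X (Set.Ioi t))
    (C := fun V _ => CondProbFactors μ X (t + 1) V)
    (generateFrom_piiUnionInter_measurableSet (fun j => .comap (X j) inferInstance) _).symm
    (isPiSystem_piiUnionInter _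
      (fun j => @MeasurableSpace.isPiSystem_measurableSet Ω (.comap (X j) inferInstance)) _)
    CondProbFactors.empty ?_ ?_ ?_ V hV
  · rintro _ ⟨T, hT, W, hW, rfl⟩
    exact hX.condProbFactors_biInter T hW fun j hj => hT hj
  · exact fun V hV h => h.compl hX.measurable (sigmaSet_le hX.measurable _ V hV)
  · exact fun V hdisj hV h =>
      CondProbFactors.iUnion hX.measurable (fun i => sigmaSet_le hX.measurable _ _ (hV i)) hdisj h

lemma comparable_measure_inter (hX : IsMarkovChain μ X κ) (hE : IsElliptic μ X κ c)
    (hU : MeasurableSet[sigmaSet X (Set.Iic t)] U)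
    (hV : MeasurableSet[sigmaSet X (Set.Ioi t)] V) :
    Comparable c (μ (U ∩ V)) (μ U * μ V) := by
  obtain ⟨φ, hφ, hrep⟩ := hX.condProbFactors_of_measurableSet hV
  have hμV : ∫⁻ y, φ y ∂μ.map (X (t + 1)) = μ V := by
    rw [lintegral_map hφ (hX.measurable _), ← setLIntegral_univ, ← hrep _ MeasurableSet.univ,
      Set.univ_inter]
  rw [hrep U (sigmaSet_mono (Set.Iic_subset_Iic.2 t.le_succ) U hU),
    hX.setLIntegral_comp_succ hU hφ, mul_comm]
  exact comparable_setLIntegral (hφ.lintegral_kernel.comp (hX.measurable t))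
    (hμV ▸ hE.ae_comparable_lintegral t hφ) U

end Finite

section Probability

variable [IsProbabilityMeasure μ]

lemma comparable_measure_inter_preimage_of_lt (hX : IsMarkovChain μ X κ)
    (hE : IsElliptic μ X κ c) (hc : 1 ≤ c) {n : ℕ}
    (hU : MeasurableSet[sigmaSet X (Set.Iio n)] U) {A : Set E} (hA : MeasurableSet A) :
    Comparable c (μ (U ∩ X n ⁻¹' A)) (μ U * μ (X n ⁻¹' A)) := by
  cases n with
  | zero =>
    have hbot : sigmaSet X (Set.Iio 0) = ⊥ := by simp [sigmaSet]
    rcases MeasurableSpace.measurableSet_bot_iff.mp (hbot ▸ hU) with rfl | rfl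
    · simpa using Comparable.refl hc 0
    · simpa using Comparable.refl hc (μ (X 0 ⁻¹' A))
  | succ m =>
    exact hX.comparable_measure_inter hE (sigmaSet_mono (fun j hj => Nat.lt_succ_iff.mp hj) U hU)
      (measurableSet_sigmaSet_preimage (Nat.lt_succ_self m) hA)

lemma comparable_measure_preimage_inter (hX : IsMarkovChain μ X κ) (hE : IsElliptic μ X κ c)
    (hc : 1 ≤ c) (hc' : c ≠ ∞) {n : ℕ} {A : Set E}
    (hA : MeasurableSet A) {S : Set Ω} (hS : MeasurableSet[sigmaSet X {n}ᶜ] S) :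
    Comparable (c ^ 3) (μ (X n ⁻¹' A ∩ S)) (μ (X n ⁻¹' A) * μ S) := by
  rw [← Set.Iio_union_Ioi, sigmaSet_union] at hS
  refine comparable_of_forall_inter (sigmaSet_le hX.measurable _) (sigmaSet_le hX.measurable _)
    (ENNReal.pow_ne_top hc') (hX.measurable n hA) (fun U W hU hW => ?_) hS
  have hU' : MeasurableSet[sigmaSet X (Set.Iic n)] U := sigmaSet_mono Set.Iio_subset_Iic_self U hU
  have hUA : MeasurableSet[sigmaSet X (Set.Iic n)] (U ∩ X n ⁻¹' A) :=
    hU'.inter (measurableSet_sigmaSet_preimage Set.self_mem_Iic hA)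
  have h₁ := hX.comparable_measure_inter hE hUA hW
  have h₂ := (hX.comparable_measure_inter_preimage_of_lt hE hc hU hA).mul_right (μ W)
  have h₃ := (hX.comparable_measure_inter hE hU' hW).symm.mul_right (μ (X n ⁻¹' A))
  rw [mul_right_comm] at h₃
  have h := (h₁.trans h₂).trans h₃
  rwa [← pow_three', Set.inter_right_comm, Set.inter_comm, mul_comm (μ (U ∩ W))] at h

end Probability

end IsMarkovChain

theorem UEChain.ae_comparable_condExp_indicator {μ : Measure Ω} {X : ℕ → Ω → E}
    {κ : ℕ → Kernel E E} {C : ℝ} (h : UEChain μ X κ C) (hC : 1 ≤ C) {𝓑 : Finset ℕ} {n : ℕ}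
    (hn : n ∉ 𝓑) {A : Set E} (hA : MeasurableSet A) :
    ∀ᵐ ω ∂μ,
      (C ^ 3)⁻¹ * μ.real (X n ⁻¹' A) ≤
        μ[(X n ⁻¹' A).indicator (fun _ => (1 : ℝ)) | sigmaFinset X 𝓑] ω ∧
      μ[(X n ⁻¹' A).indicator (fun _ => (1 : ℝ)) | sigmaFinset X 𝓑] ω ≤
        C ^ 3 * μ.real (X n ⁻¹' A) := by
  have := h.1
  have hX := h.isMarkovChain
  have hm : sigmaFinset X 𝓑 ≤ ‹MeasurableSpace Ω› := sigmaSet_le hX.measurable 𝓑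
  have hA' := hX.measurable n hA
  have hC3 : (ENNReal.ofReal C ^ 3).toReal = C ^ 3 := by
    rw [ENNReal.toReal_pow, ENNReal.toReal_ofReal (by linarith)]
  have hcomp (S : Set Ω) (hS : MeasurableSet[sigmaFinset X 𝓑] S) :=
    (hX.comparable_measure_preimage_inter h.isElliptic (ENNReal.one_le_ofReal.mpr hC)
      ENNReal.ofReal_ne_top hA (sigmaSet_mono (fun j hj => ne_of_mem_of_not_mem hj hn) S hS)).toReal
      (ENNReal.pow_ne_top ENNReal.ofReal_ne_top)
      (ENNReal.mul_ne_top (measure_ne_top _ _) (measure_ne_top _ _))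
  have hlower := ae_le_condExp_indicator (μ := μ) (b := (C ^ 3)⁻¹ * μ.real (X n ⁻¹' A)) hm hA'
    fun S hS => by
      have := (hcomp S hS).2
      rw [hC3, ENNReal.toReal_mul] at this
      rw [mul_assoc, inv_mul_le_iff₀ (by positivity)]
      exact this
  have hupper := condExp_indicator_ae_le (μ := μ) (b := C ^ 3 * μ.real (X n ⁻¹' A)) hm hA'
    fun S hS => by
      have := (hcomp S hS).1
      rw [hC3, ENNReal.toReal_mul] at this
      rw [mul_assoc]
      exact this
  filter_upwards [hlower, hupper] with ω h₁ h₂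
  exact ⟨h₁, h₂⟩

theorem conditional_q_comparable_general (C : ℝ) (hC : 1 < C) (K : ℕ) :
    ∃ A : ℝ, 1 ≤ A ∧
      ∀ (Ω E : Type) [MeasurableSpace Ω] [MeasurableSpace E]
        (μ : Measure Ω) (X : ℕ → Ω → E) (κ : ℕ → Kernel E E) (f : ℕ → E → ℤ),
        UEChain μ X κ C →
        (∀ n, Measurable (f n)) →
        (∀ n ω, |f n (X n ω)| ≤ (K : ℤ)) →
        ∀ m : ℕ, 2 ≤ m →
          ∀ (N : ℕ) (𝓑 : Finset ℕ), 𝓑 ⊆ Finset.Icc 1 N →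
            ∀ n, n ∉ 𝓑 →
              ∀ᵐ ω ∂μ,
                A⁻¹ * qres μ X f n m ≤ condQres μ X f (sigmaFinset X 𝓑) n m ω ∧
                condQres μ X f (sigmaFinset X 𝓑) n m ω ≤ A * qres μ X f n m := by
  refine ⟨C ^ 3, one_le_pow₀ hC.le, ?_⟩
  intro Ω E _ _ μ X κ f hchain hf _ m hm N 𝓑 _ n hn
  have : NeZero m := ⟨by omega⟩
  have : Nontrivial (ZMod m) := ZMod.nontrivial_iff.mpr (by omega)
  have hC3 : 0 < C ^ 3 := by positivity
  have hres (j : ZMod m) := hchain.ae_comparable_condExp_indicator hC.le hn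
    (hf n (MeasurableSet.of_discrete (s := {z : ℤ | (z : ZMod m) = j})))
  filter_upwards [ae_all_iff.mpr hres] with ω hω
  refine ⟨?_, secondLargest_le_mul hC3.le fun j => (hω j).2⟩
  rw [inv_mul_le_iff₀ hC3]
  exact secondLargest_le_mul hC3.le fun j => (inv_mul_le_iff₀ hC3).mp (hω j).1

/-- Lemma 3.8(ii). There exists `A ≥ 1`, depending only on `K` and the
ellipticity constant `C`, such that for every integer `m ≥ 2`, every `𝓑 ⊆ {1,…,N}`,
`𝓔 = σ(X_n : n ∈ 𝓑)`, every `n ∉ 𝓑` and a.e. sample point,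
`A⁻¹ q_n(m) ≤ q_n(m | 𝓔) ≤ A q_n(m)`. -/
theorem conditional_q_comparable (C : ℝ) (hC : 1 < C) (K : ℕ) (hK : 1 ≤ K) :
    ∃ A : ℝ, 1 ≤ A ∧
      ∀ (Ω E : Type) [MeasurableSpace Ω] [MeasurableSpace E]
        (μ : Measure Ω) (X : ℕ → Ω → E) (κ : ℕ → Kernel E E) (f : ℕ → E → ℤ),
        UEChain μ X κ C →
        (∀ n, Measurable (f n)) →
        (∀ n ω, |f n (X n ω)| ≤ (K : ℤ)) →
        ∀ m : ℕ, 2 ≤ m →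
          ∀ (N : ℕ) (𝓑 : Finset ℕ), 𝓑 ⊆ Finset.Icc 1 N →
            ∀ n, n ∉ 𝓑 →
              ∀ᵐ ω ∂μ,
                A⁻¹ * qres μ X f n m ≤ condQres μ X f (sigmaFinset X 𝓑) n m ω ∧
                condQres μ X f (sigmaFinset X 𝓑) n m ω ≤ A * qres μ X f n m :=
  conditional_q_comparable_general C hC K

end EdgeworthMC
end
end

section
/- If Z is an integer-valued random variable with ||Z||_{L∞} ≤ K, and q(Z) denotes the probability that Z takes its second most likely value, then q(Z)/4 ≤ Var(Z) ≤ 8K³ q(Z). -/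
/-! For the lower bound, let `n` be the integer nearest to `𝔼 Z`: every other integer lies at
distance at least `1/2` from `𝔼 Z`, so Chebyshev's inequality gives `ℙ(Z ≠ n) ≤ 4 Var Z`, while
`q(Z) ≤ ℙ(Z ≠ n)` for every `n`. For the upper bound, let `m` be a most likely value: then
`Var Z ≤ 𝔼 (Z - m)² ≤ (2K)² ℙ(Z ≠ m)`, and `ℙ(Z ≠ m)` is a sum of at most `2K` probabilities
`ℙ(Z = i)` with `i ≠ m`, each of which is at most `q(Z)`. -/

open MeasureTheory ProbabilityTheory

noncomputable section

namespace EdgeworthMC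

/-- The probability that the integer-valued random variable `Z` takes its second most
likely value (with multiplicity): `q(Z) = min_j max_{i ≠ j} ℙ(Z = i)`. -/
def secondLargestProb {Ω : Type*} [MeasurableSpace Ω] (μ : Measure Ω) (Z : Ω → ℤ) : ℝ :=
  ⨅ j : ℤ, sSup ((fun i : ℤ => (μ {ω | Z ω = i}).toReal) '' {j}ᶜ)

end EdgeworthMC

open Finset

namespace Int

variable {α : Type*} [Field α] [LinearOrder α] [IsStrictOrderedRing α] [FloorRing α]

lemma mem_Icc_neg_floor_iff {K : α} {z : ℤ} : z ∈ Icc (-⌊K⌋) ⌊K⌋ ↔ |(z : α)| ≤ K := by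
  rw [mem_Icc, abs_le, neg_le, le_floor, le_floor]
  push_cast
  constructor <;> rintro ⟨h₁, h₂⟩ <;> exact ⟨by linarith, h₂⟩

lemma card_Icc_neg_floor_erase_le {K : α} {m : ℤ} (hm : m ∈ Icc (-⌊K⌋) ⌊K⌋) :
    (#((Icc (-⌊K⌋) ⌊K⌋).erase m) : α) ≤ 2 * K := by
  have hK : 0 ≤ ⌊K⌋ := by rw [mem_Icc] at hm; omega
  have hcard : (#((Icc (-⌊K⌋) ⌊K⌋).erase m) : ℤ) = 2 * ⌊K⌋ := by
    rw [card_erase_of_mem hm, card_Icc]; omega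
  have hcard' : (#((Icc (-⌊K⌋) ⌊K⌋).erase m) : α) = 2 * ⌊K⌋ := by exact_mod_cast hcard
  linarith [floor_le K]

lemma half_le_abs_sub_of_ne_round {x : α} {z : ℤ} (hz : z ≠ round x) :
    1 / 2 ≤ |(z : α) - x| := by
  have hz' : (1 : α) ≤ |(z : α) - round x| := by exact_mod_cast one_le_abs (sub_ne_zero.2 hz)
  calc (1 : α) / 2 ≤ |(z : α) - round x| - |x - round x| := by linarith [abs_sub_round x]
    _ ≤ |(z : α) - x| := by simpa using abs_sub_abs_le_abs_sub ((z : α) - round x) (x - round x)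

end Int

namespace ProbabilityTheory

variable {Ω : Type*} [MeasurableSpace Ω] {μ : Measure Ω}

lemma variance_le_sq_mul_measureReal_ne [IsProbabilityMeasure μ] {X : Ω → ℝ} (hX : Measurable X)
    {b c : ℝ} (hb : ∀ ω, |X ω - c| ≤ b) : variance X μ ≤ b ^ 2 * μ.real {ω | X ω ≠ c} := by
  have hne : MeasurableSet {ω | X ω ≠ c} := hX (measurableSet_singleton c).compl
  calc variance X μ = variance (fun ω => X ω - c) μ :=
        (variance_sub_const hX.aestronglyMeasurable c).symm
    _ ≤ ∫ ω, (X ω - c) ^ 2 ∂μ := variance_le_expectation_sq (by fun_prop)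
    _ ≤ ∫ ω, {ω | X ω ≠ c}.indicator (fun _ => b ^ 2) ω ∂μ := by
      refine integral_mono_of_nonneg (ae_of_all _ fun ω => sq_nonneg _)
        ((integrable_const _).indicator hne) (ae_of_all _ fun ω => ?_)
      by_cases hω : X ω = c
      · simp [hω]
      · rw [Set.indicator_of_mem hω]
        exact (sq_abs _).symm.trans_le (pow_le_pow_left₀ (abs_nonneg _) (hb ω) 2)
    _ = b ^ 2 * μ.real {ω | X ω ≠ c} := by
      rw [integral_indicator_const _ hne, smul_eq_mul, mul_comm]

lemma measureReal_ne_round_le_four_mul_variance [IsFiniteMeasure μ] {Z : Ω → ℤ}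
    (hZ : MemLp (fun ω => (Z ω : ℝ)) 2 μ) :
    μ.real {ω | Z ω ≠ round μ[fun ω => (Z ω : ℝ)]} ≤ 4 * variance (fun ω => (Z ω : ℝ)) μ := by
  have hsub : {ω | Z ω ≠ round μ[fun ω => (Z ω : ℝ)]} ⊆
      {ω | 1 / 2 ≤ |(Z ω : ℝ) - μ[fun ω => (Z ω : ℝ)]|} :=
    fun ω hω => Int.half_le_abs_sub_of_ne_round hω
  have hchebyshev := meas_ge_le_variance_div_sq hZ (c := 1 / 2) (by norm_num)
  refine (measureReal_mono hsub).trans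
    ((ENNReal.toReal_le_of_le_ofReal ?_ hchebyshev).trans_eq ?_)
  · exact div_nonneg (variance_nonneg _ _) (by norm_num)
  · ring

end ProbabilityTheory

namespace EdgeworthMC

section

variable {Ω : Type*} [MeasurableSpace Ω] {μ : Measure Ω} {Z : Ω → ℤ}

variable (μ Z) in
def IsMode (m : ℤ) : Prop := ∀ i, μ.real {ω | Z ω = i} ≤ μ.real {ω | Z ω = m}

lemma exists_isMode_mem [Nonempty Ω] {S : Finset ℤ} (hS : ∀ ω, Z ω ∈ S) :
    ∃ m ∈ S, IsMode μ Z m := by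
  obtain ⟨m, hmS, hm⟩ :=
    S.exists_max_image (fun i => μ.real {ω | Z ω = i}) ⟨_, hS Classical.ofNonempty⟩
  refine ⟨m, hmS, fun i => ?_⟩
  by_cases hi : i ∈ S
  · exact hm i hi
  · have : {ω | Z ω = i} = ∅ :=
      Set.eq_empty_of_forall_notMem fun ω (hω : Z ω = i) => hi (hω ▸ hS ω)
    simp [this]

lemma secondLargestProb_nonneg : 0 ≤ secondLargestProb μ Z :=
  le_ciInf fun _ => Real.sSup_nonneg (by rintro _ ⟨i, -, rfl⟩; exact ENNReal.toReal_nonneg)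

variable [IsFiniteMeasure μ]

lemma secondLargestProb_le_measureReal_ne (n : ℤ) :
    secondLargestProb μ Z ≤ μ.real {ω | Z ω ≠ n} := by
  refine (ciInf_le ⟨0, ?_⟩ n).trans (Real.sSup_le ?_ measureReal_nonneg)
  · rintro _ ⟨j, rfl⟩
    exact Real.sSup_nonneg (by rintro _ ⟨i, -, rfl⟩; exact ENNReal.toReal_nonneg)
  · rintro _ ⟨i, hi, rfl⟩
    exact measureReal_mono fun ω (hω : Z ω = i) => hω.trans_ne hi

lemma IsMode.measureReal_eq_le_secondLargestProb {m i : ℤ} (hm : IsMode μ Z m) (hi : i ≠ m) :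
    μ.real {ω | Z ω = i} ≤ secondLargestProb μ Z := by
  have hbdd (j : ℤ) : BddAbove ((fun i : ℤ => (μ {ω | Z ω = i}).toReal) '' {j}ᶜ) :=
    ⟨μ.real Set.univ, by rintro _ ⟨i, -, rfl⟩; exact measureReal_mono (Set.subset_univ _)⟩
  refine le_ciInf fun j => ?_
  obtain rfl | hij := eq_or_ne i j
  · exact (hm i).trans (le_csSup (hbdd i) ⟨m, hi.symm, rfl⟩)
  · exact le_csSup (hbdd j) ⟨i, hij, rfl⟩

lemma measureReal_ne_eq_sum_erase (hZ : Measurable Z) {S : Finset ℤ} (hS : ∀ ω, Z ω ∈ S)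
    (m : ℤ) : μ.real {ω | Z ω ≠ m} = ∑ i ∈ S.erase m, μ.real {ω | Z ω = i} := by
  have hpreimage : {ω | Z ω ≠ m} = Z ⁻¹' ↑(S.erase m) := by ext ω; simp [hS ω]
  rw [hpreimage, ← sum_measureReal_preimage_singleton _ fun i _ => hZ (measurableSet_singleton i)]
  rfl

lemma IsMode.measureReal_ne_le {m : ℤ} (hm : IsMode μ Z m) (hZ : Measurable Z)
    {S : Finset ℤ} (hS : ∀ ω, Z ω ∈ S) :
    μ.real {ω | Z ω ≠ m} ≤ #(S.erase m) * secondLargestProb μ Z := by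
  rw [measureReal_ne_eq_sum_erase hZ hS, ← nsmul_eq_mul]
  exact sum_le_card_nsmul _ _ _ fun i hi =>
    hm.measureReal_eq_le_secondLargestProb (ne_of_mem_erase hi)

end

/-- inequality (3.9) of the paper. If `Z` is an integer-valued random
variable with `‖Z‖_{L^∞} ≤ K` and `q(Z)` is the probability that `Z` takes its second most
likely value, then `q(Z)/4 ≤ Var(Z) ≤ 8K³ q(Z)`. -/
theorem variance_comparable_secondLargestProb
    {Ω : Type*} [MeasurableSpace Ω] (μ : Measure Ω) [IsProbabilityMeasure μ]
    (Z : Ω → ℤ) (hZ : Measurable Z) (K : ℝ) (hK : ∀ ω, |(Z ω : ℝ)| ≤ K) :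
    secondLargestProb μ Z / 4 ≤ variance (fun ω => ((Z ω : ℝ))) μ ∧
    variance (fun ω => ((Z ω : ℝ))) μ ≤ 8 * K ^ 3 * secondLargestProb μ Z := by
  have := nonempty_of_isProbabilityMeasure μ
  have hZS (ω : Ω) : Z ω ∈ Icc (-⌊K⌋) ⌊K⌋ := Int.mem_Icc_neg_floor_iff.2 (hK ω)
  obtain ⟨m, hmS, hm⟩ := exists_isMode_mem (μ := μ) hZS
  have hX : Measurable fun ω => (Z ω : ℝ) := by fun_prop
  constructor
  · have hL2 : MemLp (fun ω => (Z ω : ℝ)) 2 μ :=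
      MemLp.of_bound hX.aestronglyMeasurable K (ae_of_all _ hK)
    linarith [secondLargestProb_le_measureReal_ne (μ := μ) (Z := Z) (round μ[fun ω => (Z ω : ℝ)]),
      measureReal_ne_round_le_four_mul_variance hL2]
  · have hdist (ω : Ω) : |(Z ω : ℝ) - m| ≤ 2 * K := by
      linarith [abs_sub (Z ω : ℝ) m, hK ω, Int.mem_Icc_neg_floor_iff.1 hmS]
    calc variance (fun ω => (Z ω : ℝ)) μ ≤ (2 * K) ^ 2 * μ.real {ω | (Z ω : ℝ) ≠ m} :=
          variance_le_sq_mul_measureReal_ne hX hdist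
      _ ≤ (2 * K) ^ 2 * (#((Icc (-⌊K⌋) ⌊K⌋).erase m) * secondLargestProb μ Z) := by
          gcongr
          simpa using hm.measureReal_ne_le hZ hZS
      _ ≤ (2 * K) ^ 2 * (2 * K * secondLargestProb μ Z) := by
          gcongr
          · exact secondLargestProb_nonneg
          · exact Int.card_Icc_neg_floor_erase_le hmS
      _ = 8 * K ^ 3 * secondLargestProb μ Z := by ring

end EdgeworthMC
end
end
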